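/- The function u(x,t) = a₀ − a₀ tanh(x − c t)² with c = (45a + 15λ a₀ − 8α a₀²)/45 satisfies the Gardner-Kawahara equation u_t + a u_x + λ u u_x − α u² u_x + μ u_xxx + β u_xxxxx = 0, where β = α a₀²/360 and μ = (3λ a₀ − 2α a₀²)/36. -/

import Mathlib

/-!
`u` is a travelling wave `F (x - c t)` with profile `F = a₀ (1 - tanh²) = a₀ sech²`. Since
`tanh' = 1 - tanh²`, differentiating `y ↦ p (tanh y)` for a polynomial `p` gives `y ↦ q (tanh y)`
with `q = p' (1 - X²)`. So every derivative of `F` is a polynomial in `tanh`, the equation reduces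
to a polynomial identity in `tanh (x - c t)`, and that identity holds for the given `c`, `μ`, `β`.
-/

open Real Polynomial

theorem Real.hasDerivAt_tanh (y : ℝ) : HasDerivAt tanh (1 - tanh y ^ 2) y := by
  have h := (hasDerivAt_sinh y).div (hasDerivAt_cosh y) (cosh_pos y).ne'
  rw [show sinh / cosh = tanh from funext fun z => (tanh_eq_sinh_div_cosh z).symm] at h
  refine h.congr_deriv ?_
  rw [tanh_eq_sinh_div_cosh]
  field_simp

noncomputable def tanhDerivPoly (p : ℝ[X]) : ℝ[X] := derivative p * (1 - X ^ 2)

theorem hasDerivAt_eval_tanh (p : ℝ[X]) (y : ℝ) :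
    HasDerivAt (fun y => p.eval (tanh y)) ((tanhDerivPoly p).eval (tanh y)) y := by
  refine ((p.hasDerivAt (tanh y)).comp y (hasDerivAt_tanh y)).congr_deriv ?_
  simp [tanhDerivPoly]

theorem iteratedDeriv_eval_tanh (p : ℝ[X]) (n : ℕ) :
    iteratedDeriv n (fun y => p.eval (tanh y)) =
      fun y => (tanhDerivPoly^[n] p).eval (tanh y) := by
  induction n generalizing p with
  | zero => rfl
  | succ n ih =>
    rw [iteratedDeriv_succ', Function.iterate_succ_apply, ← ih]
    congr 1
    exact funext fun y => (hasDerivAt_eval_tanh p y).deriv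

theorem travelingWave_gardnerKawahara (a lam alpha mu beta c : ℝ) {F : ℝ → ℝ}
    (hF : Differentiable ℝ F) (x t : ℝ) :
    deriv (fun t' => F (x - c * t')) t + a * deriv (fun x' => F (x' - c * t)) x
        + lam * F (x - c * t) * deriv (fun x' => F (x' - c * t)) x
        - alpha * F (x - c * t) ^ 2 * deriv (fun x' => F (x' - c * t)) x
        + mu * iteratedDeriv 3 (fun x' => F (x' - c * t)) x
        + beta * iteratedDeriv 5 (fun x' => F (x' - c * t)) x
      = (a - c + lam * F (x - c * t) - alpha * F (x - c * t) ^ 2) * deriv F (x - c * t)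
        + mu * iteratedDeriv 3 F (x - c * t) + beta * iteratedDeriv 5 F (x - c * t) := by
  have htime : HasDerivAt (fun t' => F (x - c * t')) (deriv F (x - c * t) * -(c * 1)) t :=
    (hF _).hasDerivAt.comp t (((hasDerivAt_id t).const_mul c).const_sub x)
  rw [htime.deriv, iteratedDeriv_comp_sub_const, iteratedDeriv_comp_sub_const,
    deriv_comp_sub_const]
  ring

noncomputable def sechSqProfile (a0 : ℝ) : ℝ[X] := C a0 * (1 - X ^ 2)

theorem sechSqProfile_travelingWave_ode {a lam alpha a0 c mu beta : ℝ}
    (hc : c = (45 * a + 15 * lam * a0 - 8 * alpha * a0 ^ 2) / 45)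
    (hmu : mu = (3 * lam * a0 - 2 * alpha * a0 ^ 2) / 36)
    (hbeta : beta = alpha * a0 ^ 2 / 360) (T : ℝ) :
    (a - c + lam * (sechSqProfile a0).eval T - alpha * (sechSqProfile a0).eval T ^ 2)
        * (tanhDerivPoly (sechSqProfile a0)).eval T
      + mu * (tanhDerivPoly^[3] (sechSqProfile a0)).eval T
      + beta * (tanhDerivPoly^[5] (sechSqProfile a0)).eval T = 0 := by
  subst hc hmu hbeta
  simp only [tanhDerivPoly, sechSqProfile, Function.iterate_succ_apply', Function.iterate_zero_apply,
    derivative_mul, derivative_add, derivative_sub, derivative_C, derivative_X, derivative_X_sq,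
    derivative_zero, derivative_one, eval_mul, eval_add, eval_sub, eval_C, eval_X, eval_pow,
    eval_one, eval_zero]
  ring

/-- The tanh-squared solution (Set 3) of the Gardner-Kawahara equation. -/
theorem gardner_kawahara_tanh_solution_set3
    (a lam alpha a0 : ℝ)
    (c beta mu : ℝ)
    (hc : c = (45 * a + 15 * lam * a0 - 8 * alpha * a0 ^ 2) / 45)
    (hbeta : beta = alpha * a0 ^ 2 / 360)
    (hmu : mu = (3 * lam * a0 - 2 * alpha * a0 ^ 2) / 36)
    (u : ℝ → ℝ → ℝ)
    (hu : ∀ x t, u x t = a0 - a0 * (Real.tanh (x - c * t)) ^ 2) :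
    ∀ x t : ℝ,
      deriv (fun t' => u x t') t + a * deriv (fun x' => u x' t) x
        + lam * u x t * deriv (fun x' => u x' t) x
        - alpha * (u x t) ^ 2 * deriv (fun x' => u x' t) x
        + mu * iteratedDeriv 3 (fun x' => u x' t) x
        + beta * iteratedDeriv 5 (fun x' => u x' t) x = 0 := by
  intro x t
  set F : ℝ → ℝ := fun y => (sechSqProfile a0).eval (tanh y)
  obtain rfl : u = fun x t => F (x - c * t) := by
    funext x t
    simp only [F, hu, sechSqProfile, eval_mul, eval_C, eval_sub, eval_one, eval_pow, eval_X]
    ring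
  have hF : Differentiable ℝ F := fun y => (hasDerivAt_eval_tanh _ y).differentiableAt
  rw [travelingWave_gardnerKawahara a lam alpha mu beta c hF, iteratedDeriv_eval_tanh,
    iteratedDeriv_eval_tanh, (hasDerivAt_eval_tanh _ _).deriv]
  exact sechSqProfile_travelingWave_ode hc hmu hbeta _
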